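/- arXiv:1206.6269 — 4 statements merged into one kernel-verified Lean document; each statement's English description precedes it below -/
import Mathlib

section
/- For N ≥ 2, the unit vector φ₁ ∈ C^N with coordinates ((N−1)a, −a, ..., −a) where a = (N(N−1))^{-1/2} satisfies Σⱼ aⱼ = 0, has unit norm, and its output entropy under the diagonal map equals log N − (1 − 2/N) log(N−1). -/
open Real

theorem Fin.sum_ite_val_eq_zero {R : Type*} [Ring R] {N : ℕ} (hN : 0 < N) (A B : R) :
    ∑ j : Fin N, (if (j : ℕ) = 0 then A else B) = A + ((N : R) - 1) * B := by
  obtain ⟨M, rfl⟩ : ∃ M, N = M + 1 := ⟨N - 1, by omega⟩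
  simp [Fin.sum_univ_succ, Finset.sum_const, nsmul_eq_mul]

theorem negMulLog_sub_one_div_add_mul_negMulLog_inv {n : ℝ} (hn : 1 < n) :
    negMulLog ((n - 1) / n) + (n - 1) * negMulLog (n * (n - 1))⁻¹
      = log n - (1 - 2 / n) * log (n - 1) := by
  have hn0 : n ≠ 0 := by positivity
  have hn1 : n - 1 ≠ 0 := by linarith
  rw [negMulLog, negMulLog, log_inv, log_mul hn0 hn1, log_div hn1 hn0]
  field_simp
  ring

/-- For N ≥ 2, the unit vector φ₁ ∈ ℝ^N with coordinates ((N−1)a, −a, ..., −a),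
a = (N(N−1))^{-1/2}, satisfies Σ aⱼ = 0, has unit norm, and its diagonal-map output
entropy equals log N − (1 − 2/N)·log(N−1). -/
theorem stmt1 (N : ℕ) (hN : 2 ≤ N) (a : ℝ)
    (ha : a = (Real.sqrt ((N : ℝ) * ((N : ℝ) - 1)))⁻¹)
    (φ : Fin N → ℝ)
    (hφ : ∀ j : Fin N, φ j = if (j : ℕ) = 0 then ((N : ℝ) - 1) * a else -a) :
    (∑ j, φ j = 0) ∧
    (∑ j, (φ j) ^ 2 = 1) ∧
    (∑ j, Real.negMulLog ((φ j) ^ 2)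
      = Real.log N - (1 - 2 / (N : ℝ)) * Real.log ((N : ℝ) - 1)) := by
  have hn : (1 : ℝ) < N := by exact_mod_cast hN
  have hn1 : (N : ℝ) - 1 ≠ 0 := by linarith
  have ha2 : a ^ 2 = ((N : ℝ) * (N - 1))⁻¹ := by
    rw [ha, inv_pow, sq_sqrt (by nlinarith)]
  have hφ2 : ∀ j, φ j ^ 2 =
      if (j : ℕ) = 0 then ((N : ℝ) - 1) / N else ((N : ℝ) * (N - 1))⁻¹ := by
    intro j
    rw [hφ j]
    split_ifs
    · rw [mul_pow, ha2]
      field_simp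
    · rw [neg_sq, ha2]
  have hsum := Fin.sum_ite_val_eq_zero (R := ℝ) (by omega : 0 < N)
  refine ⟨?_, ?_, ?_⟩
  · simp_rw [hφ, hsum]
    ring
  · simp_rw [hφ2, hsum]
    field_simp
    ring
  · simp_rw [hφ2, apply_ite negMulLog, hsum]
    exact negMulLog_sub_one_div_add_mul_negMulLog_inv hn
end

section
/- For integers N with 2 ≤ N ≤ 6, one has log 2 ≤ log N − (1 − 2/N) log(N−1), while for every integer N > 6 the reverse strict inequality log N − (1 − 2/N) log(N−1) < log 2 holds. -/
/-!
Multiplying by `N` and exponentiating, the inequality `log 2 ≤ log N - (1 - 2 / N) log (N - 1)`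
becomes `2 ^ N (N - 1) ^ (N - 2) ≤ N ^ N`, which settles `2 ≤ N ≤ 6` by computation.
For `N ≥ 7` write the left side as `(log N - log (N - 1)) + 2 log (N - 1) / N`: the first term is
at most `1 / (N - 1) ≤ 1 / 6`, the second is decreasing in `N`, hence at most `2 log 6 / 7`, and
`1 / 6 + 2 log 6 / 7 < log 2`.
-/

open Real

theorem log_two_le_log_sub_iff {N : ℕ} (hN : 2 ≤ N) :
    log 2 ≤ log N - (1 - 2 / (N : ℝ)) * log ((N : ℝ) - 1) ↔
      2 ^ N * (N - 1) ^ (N - 2) ≤ N ^ N := by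
  have hN1 : 0 < N - 1 := by omega
  have hN0 : (0 : ℝ) < N := by positivity
  have hlog : log ((2 ^ N * (N - 1) ^ (N - 2) : ℕ) : ℝ) =
      N * log 2 + ((N : ℝ) - 2) * log ((N : ℝ) - 1) := by
    rw [Nat.cast_mul, log_mul (by positivity) (by positivity), Nat.cast_pow, Nat.cast_pow,
      log_pow, log_pow, Nat.cast_sub hN, Nat.cast_sub (by omega : 1 ≤ N)]
    push_cast
    ring
  have hscale : N * (log N - (1 - 2 / (N : ℝ)) * log ((N : ℝ) - 1)) =
      N * log N - ((N : ℝ) - 2) * log ((N : ℝ) - 1) := by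
    field_simp
  rw [← Nat.cast_le (α := ℝ), ← log_le_log_iff (x := ((2 ^ N * (N - 1) ^ (N - 2) : ℕ) : ℝ))
    (by positivity) (by positivity), hlog, Nat.cast_pow, log_pow, ← mul_le_mul_iff_right₀ hN0,
    hscale]
  constructor <;> intro h <;> linarith

theorem log_sub_log_sub_one_le {x : ℝ} (hx : 1 < x) : log x - log (x - 1) ≤ 1 / (x - 1) := by
  have hx1 : 0 < x - 1 := by linarith
  have h := log_le_sub_one_of_pos (div_pos (by linarith) hx1)
  rw [log_div (by linarith) hx1.ne'] at h
  calc log x - log (x - 1) ≤ x / (x - 1) - 1 := h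
    _ = 1 / (x - 1) := by field_simp; ring

theorem log_div_add_one_le_log_sub_one_div {x : ℝ} (hx : 1 < x)
    (h : x / (x - 1) ≤ log (x - 1)) : log x / (x + 1) ≤ log (x - 1) / x := by
  have hx1 : 0 < x - 1 := by linarith
  have hstep : x * log x ≤ x * log (x - 1) + x / (x - 1) := by
    have := mul_le_mul_of_nonneg_left (log_sub_log_sub_one_le hx) (by linarith : 0 ≤ x)
    rw [mul_one_div] at this
    linarith
  rw [div_le_div_iff₀ (by linarith) (by linarith)]
  linarith

theorem log_six_le : log 6 ≤ 3 * log 2 - 1 / 4 := by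
  have h := log_le_sub_one_of_pos (by norm_num : (0 : ℝ) < 6 / 8)
  rw [log_div (by norm_num) (by norm_num), show (8 : ℝ) = 2 ^ 3 by norm_num, log_pow] at h
  push_cast at h
  linarith

theorem log_sub_one_div_le_of_seven_le {n : ℕ} (hn : 7 ≤ n) :
    log ((n : ℝ) - 1) / n ≤ log 6 / 7 := by
  induction n, hn using Nat.le_induction with
  | base => norm_num
  | succ n hn ih =>
    have hn7 : (7 : ℝ) ≤ n := by exact_mod_cast hn
    have hlog6 : 7 / 6 ≤ log 6 := by
      have := log_two_gt_d9
      rw [show (6 : ℝ) = 2 * 3 by norm_num, log_mul (by norm_num) (by norm_num)]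
      have : log 2 ≤ log 3 := log_le_log (by norm_num) (by norm_num)
      linarith
    have hdecr : (n : ℝ) / (n - 1) ≤ log ((n : ℝ) - 1) := by
      calc (n : ℝ) / (n - 1) ≤ 7 / 6 := by
            rw [div_le_div_iff₀ (by linarith) (by norm_num)]; linarith
        _ ≤ log 6 := hlog6
        _ ≤ log ((n : ℝ) - 1) := log_le_log (by norm_num) (by linarith)
    calc log (((n + 1 : ℕ) : ℝ) - 1) / ((n + 1 : ℕ) : ℝ) = log (n : ℝ) / (n + 1) := by
          push_cast; ring_nf
      _ ≤ log ((n : ℝ) - 1) / n := log_div_add_one_le_log_sub_one_div (by linarith) hdecr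
      _ ≤ log 6 / 7 := ih

/-- For 2 ≤ N ≤ 6, log 2 ≤ log N − (1 − 2/N) log(N−1); for N > 6 the strict reverse
inequality holds. -/
theorem stmt2 (N : ℕ) :
    (2 ≤ N → N ≤ 6 →
      Real.log 2 ≤ Real.log N - (1 - 2 / (N : ℝ)) * Real.log ((N : ℝ) - 1)) ∧
    (6 < N →
      Real.log N - (1 - 2 / (N : ℝ)) * Real.log ((N : ℝ) - 1) < Real.log 2) := by
  refine ⟨fun h2 h6 => (log_two_le_log_sub_iff h2).2 (by interval_cases N <;> norm_num),
    fun h6 => ?_⟩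
  have hN : (7 : ℝ) ≤ N := by exact_mod_cast h6
  have hsplit : log N - (1 - 2 / (N : ℝ)) * log ((N : ℝ) - 1) =
      (log N - log ((N : ℝ) - 1)) + 2 * (log ((N : ℝ) - 1) / N) := by
    field_simp
    ring
  have hdiff : log N - log ((N : ℝ) - 1) ≤ 1 / 6 :=
    (log_sub_log_sub_one_le (by linarith)).trans
      (by rw [div_le_div_iff₀ (by linarith) (by norm_num)]; linarith)
  have := log_sub_one_div_le_of_seven_le h6
  have := log_six_le
  have := log_two_gt_d9
  rw [hsplit]
  linarith
end

section
/- Let Ω be a compact convex set, P : Ω → Ω an affine idempotent map (P∘P = P), and f : Ω → ℝ a continuous function with f(Pω) = f(ω) for all ω. Define the convex roof f^∪(ω) = inf{Σ pᵢ f(ωᵢ) : ω = Σ pᵢ ωᵢ convex combination}. Then for every P-invariant point ω (i.e., Pω = ω), the infimum f^∪(ω) can be computed using only decompositions into P-invariant points; moreover f^∪(ω) ≥ f^∪(Pω) for every ω ∈ Ω. -/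
/-!
Applying `P` to every point of a convex decomposition of `ω` gives a decomposition of `P ω` into
`P`-invariant points (`P` is affine and idempotent) with the same value of `∑ pᵢ f(ωᵢ)` (`f` is
`P`-invariant). So every value attained at `ω` is attained by an invariant decomposition of `P ω`;
for invariant `ω` the two sets of values coincide, and in general the infimum can only drop.
-/

theorem AffineMap.map_sum_smul_of_sum_eq_one {V W : Type*} [AddCommGroup V] [Module ℝ V]
    [AddCommGroup W] [Module ℝ W] (P : V →ᵃ[ℝ] W) {ι : Type*} (s : Finset ι) (p : ι → ℝ)
    (x : ι → V) (hp : ∑ i ∈ s, p i = 1) :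
    P (∑ i ∈ s, p i • x i) = ∑ i ∈ s, p i • P (x i) := by
  rw [← s.affineCombination_eq_linear_combination x p hp, s.map_affineCombination x p hp,
    s.affineCombination_eq_linear_combination _ p hp]
  rfl

section ConvexDecomposition

variable {V : Type*} [AddCommGroup V] [Module ℝ V]

def convexDecompValues (A : Set V) (f : V → ℝ) (ω : V) : Set ℝ :=
  {s : ℝ | ∃ (k : ℕ) (p : Fin k → ℝ) (ωi : Fin k → V),
    (∀ i, 0 < p i) ∧ (∑ i, p i = 1) ∧ (∀ i, ωi i ∈ A) ∧
    (∑ i, p i • ωi i = ω) ∧ s = ∑ i, p i * f (ωi i)}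

theorem convexDecompValues_mono {A B : Set V} (hAB : A ⊆ B) (f : V → ℝ) (ω : V) :
    convexDecompValues A f ω ⊆ convexDecompValues B f ω := by
  rintro s ⟨k, p, ωi, hpos, hsum, hmem, hcomb, hval⟩
  exact ⟨k, p, ωi, hpos, hsum, fun i => hAB (hmem i), hcomb, hval⟩

theorem convexDecompValues_nonempty {A : Set V} (f : V → ℝ) {ω : V} (hω : ω ∈ A) :
    (convexDecompValues A f ω).Nonempty :=
  ⟨f ω, 1, fun _ => 1, fun _ => ω, fun _ => one_pos, by simp, fun _ => hω, by simp, by simp⟩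

theorem convexDecompValues_subset_of_affineMap {A B : Set V} (P : V →ᵃ[ℝ] V)
    (hPAB : Set.MapsTo P A B) {f : V → ℝ} (hfP : ∀ ω ∈ A, f (P ω) = f ω) (ω : V) :
    convexDecompValues A f ω ⊆ convexDecompValues B f (P ω) := by
  rintro s ⟨k, p, ωi, hpos, hsum, hmem, rfl, rfl⟩
  refine ⟨k, p, fun i => P (ωi i), hpos, hsum, fun i => hPAB (hmem i),
    (P.map_sum_smul_of_sum_eq_one _ p ωi hsum).symm, ?_⟩
  simp only [hfP _ (hmem _)]

theorem bddBelow_convexDecompValues [TopologicalSpace V] {A : Set V} (hA : IsCompact A)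
    {f : V → ℝ} (hf : ContinuousOn f A) (ω : V) : BddBelow (convexDecompValues A f ω) := by
  rcases A.eq_empty_or_nonempty with rfl | hne
  · refine ⟨0, ?_⟩
    rintro s ⟨_ | k, p, ωi, -, hsum, hmem, -⟩
    · simp at hsum
    · exact absurd (hmem 0) (Set.notMem_empty _)
  obtain ⟨m, -, hmin⟩ := hA.exists_isMinOn hne hf
  refine ⟨f m, ?_⟩
  rintro s ⟨k, p, ωi, hpos, hsum, hmem, -, rfl⟩
  calc f m = ∑ i, p i * f m := by rw [← Finset.sum_mul, hsum, one_mul]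
    _ ≤ ∑ i, p i * f (ωi i) :=
      Finset.sum_le_sum fun i _ => mul_le_mul_of_nonneg_left (hmin (hmem i)) (hpos i).le

end ConvexDecomposition

theorem stmt7_general
    {V : Type*} [NormedAddCommGroup V] [NormedSpace ℝ V]
    (Ω : Set V) (hΩc : IsCompact Ω)
    (P : V →ᵃ[ℝ] V) (hPΩ : Set.MapsTo P Ω Ω)
    (hP2 : ∀ ω ∈ Ω, P (P ω) = P ω)
    (f : V → ℝ) (hf : ContinuousOn f Ω)
    (hfP : ∀ ω ∈ Ω, f (P ω) = f ω)
    (roof roofInv : V → ℝ)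
    (hroof : ∀ ω, roof ω =
      sInf {s : ℝ | ∃ (k : ℕ) (p : Fin k → ℝ) (ωi : Fin k → V),
        (∀ i, 0 < p i) ∧ (∑ i, p i = 1) ∧ (∀ i, ωi i ∈ Ω) ∧
        (∑ i, p i • ωi i = ω) ∧ s = ∑ i, p i * f (ωi i)})
    (hroofInv : ∀ ω, roofInv ω =
      sInf {s : ℝ | ∃ (k : ℕ) (p : Fin k → ℝ) (ωi : Fin k → V),
        (∀ i, 0 < p i) ∧ (∑ i, p i = 1) ∧ (∀ i, ωi i ∈ Ω) ∧ (∀ i, P (ωi i) = ωi i) ∧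
        (∑ i, p i • ωi i = ω) ∧ s = ∑ i, p i * f (ωi i)}) :
    (∀ ω ∈ Ω, P ω = ω → roof ω = roofInv ω) ∧
    (∀ ω ∈ Ω, roof (P ω) ≤ roof ω) := by
  set Fix := Ω ∩ Function.fixedPoints P
  have hroof' (ω : V) : roof ω = sInf (convexDecompValues Ω f ω) := hroof ω
  have hroofInv' (ω : V) : roofInv ω = sInf (convexDecompValues Fix f ω) := by
    rw [hroofInv]
    congr 1
    ext s
    simp only [convexDecompValues, Set.mem_ofPred_eq, Fix, Set.mem_inter_iff, forall_and,
      Function.mem_fixedPoints, Function.IsFixedPt, and_assoc]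
  have hmaps : Set.MapsTo P Ω Fix := fun ω hω => ⟨hPΩ hω, hP2 ω hω⟩
  have hsub (ω : V) : convexDecompValues Ω f ω ⊆ convexDecompValues Ω f (P ω) :=
    (convexDecompValues_subset_of_affineMap P hmaps hfP ω).trans
      (convexDecompValues_mono Set.inter_subset_left f _)
  refine ⟨fun ω _ hPω => ?_, fun ω hω => ?_⟩
  · rw [hroof', hroofInv']
    congr 1
    refine (convexDecompValues_mono Set.inter_subset_left f ω).antisymm' ?_
    simpa only [hPω] using convexDecompValues_subset_of_affineMap P hmaps hfP ω
  · rw [hroof', hroof']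
    exact csInf_le_csInf (bddBelow_convexDecompValues hΩc hf _)
      (convexDecompValues_nonempty f hω) (hsub ω)

/-- Theorem 2 of the paper: for an affine idempotent P : Ω → Ω and a continuous
P-invariant f, the convex roof of f at a P-invariant point can be computed using
decompositions into P-invariant points only, and f^∪(ω) ≥ f^∪(Pω) for all ω. -/
theorem stmt7
    {V : Type*} [NormedAddCommGroup V] [NormedSpace ℝ V] [FiniteDimensional ℝ V]
    (Ω : Set V) (hΩc : IsCompact Ω) (hΩ : Convex ℝ Ω)
    (P : V →ᵃ[ℝ] V) (hPΩ : Set.MapsTo P Ω Ω)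
    (hP2 : ∀ ω ∈ Ω, P (P ω) = P ω)
    (f : V → ℝ) (hf : ContinuousOn f Ω)
    (hfP : ∀ ω ∈ Ω, f (P ω) = f ω)
    (roof roofInv : V → ℝ)
    (hroof : ∀ ω, roof ω =
      sInf {s : ℝ | ∃ (k : ℕ) (p : Fin k → ℝ) (ωi : Fin k → V),
        (∀ i, 0 < p i) ∧ (∑ i, p i = 1) ∧ (∀ i, ωi i ∈ Ω) ∧
        (∑ i, p i • ωi i = ω) ∧ s = ∑ i, p i * f (ωi i)})
    (hroofInv : ∀ ω, roofInv ω =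
      sInf {s : ℝ | ∃ (k : ℕ) (p : Fin k → ℝ) (ωi : Fin k → V),
        (∀ i, 0 < p i) ∧ (∑ i, p i = 1) ∧ (∀ i, ωi i ∈ Ω) ∧ (∀ i, P (ωi i) = ωi i) ∧
        (∑ i, p i • ωi i = ω) ∧ s = ∑ i, p i * f (ωi i)}) :
    (∀ ω ∈ Ω, P ω = ω → roof ω = roofInv ω) ∧
    (∀ ω ∈ Ω, roof (P ω) ≤ roof ω) :=
  stmt7_general Ω hΩc P hPΩ hP2 f hf hfP roof roofInv hroof hroofInv
end

section
/- If f : Ω → ℝ is concave on a compact convex set Ω, then for every ω ∈ Ω and every convex decomposition ω = Σ pᵢ ωᵢ, there exists a convex decomposition of ω into extreme points of Ω whose corresponding weighted sum of f-values is at most Σ pᵢ f(ωᵢ). Consequently the convex roof infimum taken over decompositions into extreme points equals the infimum over all decompositions. -/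
/-!
Minkowski's theorem (a compact convex set in finite dimensions is the convex hull of its extreme
points) is proved by induction on the dimension: a point outside the interior lies on a supporting
hyperplane, hence in a compact convex exposed face of smaller dimension, whose extreme points are
extreme in the whole set; an interior point lies on a chord whose two endpoints are not interior.
Given Minkowski's theorem, Jensen's inequality for the concave `f` shows that splitting each `ωᵢ`
into extreme points does not increase the weighted sum of `f`-values, so both infima are taken
over sets that dominate each other.
-/

open Set Module

universe u

section ExtremePoints

variable {𝕜 E F : Type*} [Ring 𝕜] [PartialOrder 𝕜] [AddRightMono 𝕜]
  [AddCommGroup E] [Module 𝕜 E] [AddCommGroup F] [Module 𝕜 F]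

theorem AffineMap.image_extremePoints_subset_of_injective (φ : E →ᵃ[𝕜] F)
    (hφ : Function.Injective φ) (A : Set E) :
    φ '' A.extremePoints 𝕜 ⊆ (φ '' A).extremePoints 𝕜 := by
  rintro _ ⟨a, ha, rfl⟩
  refine ⟨mem_image_of_mem φ ha.1, ?_⟩
  rintro _ ⟨b, hb, rfl⟩ _ ⟨c, hc, rfl⟩ hbc
  rw [← image_openSegment, hφ.mem_set_image] at hbc
  rw [ha.2 hb hc hbc]

end ExtremePoints

section Minkowski

variable {V : Type*} [NormedAddCommGroup V] [NormedSpace ℝ V]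

theorem IsCompact.exists_mem_segment_notMem_interior {s : Set V} (hs : IsCompact s) {x y : V}
    (hx : x ∈ s) (hxy : x ≠ y) :
    ∃ a ∈ s \ interior s, ∃ b ∈ s \ interior s, x ∈ segment ℝ a b := by
  set g : ℝ →ᵃ[ℝ] V := AffineMap.lineMap x y
  have hg : Topology.IsClosedEmbedding g := by
    have : (g : ℝ → V) = (· + x) ∘ fun t : ℝ => t • (y - x) := by
      funext t; simp [g, AffineMap.lineMap_apply]
    rw [this]
    exact (Homeomorph.addRight x).isClosedEmbedding.comp
      (isClosedEmbedding_smul_left (sub_ne_zero.2 hxy.symm))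
  set T := g ⁻¹' s
  have hT : IsCompact T := hg.isCompact_preimage hs
  have h0 : (0 : ℝ) ∈ T := by simpa [T, g] using hx
  have hTIcc : T ⊆ Icc (sInf T) (sSup T) := fun t ht =>
    ⟨csInf_le hT.bddBelow ht, le_csSup hT.bddAbove ht⟩
  have hend : ∀ t ∈ T, t ∉ Ioo (sInf T) (sSup T) → g t ∈ s \ interior s := by
    refine fun t ht hto => ⟨ht, fun hti => hto ?_⟩
    rw [← interior_Icc]
    exact interior_mono hTIcc (preimage_interior_subset_interior_preimage hg.continuous hti)
  refine ⟨g (sInf T), hend _ (hT.sInf_mem ⟨0, h0⟩) (by simp),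
    g (sSup T), hend _ (hT.sSup_mem ⟨0, h0⟩) (by simp), ?_⟩
  rw [← image_segment, segment_eq_Icc ((hTIcc h0).1.trans (hTIcc h0).2)]
  exact ⟨0, hTIcc h0, by simp [g]⟩

variable [FiniteDimensional ℝ V]

theorem Convex.exists_dual_ne_zero_le_of_notMem_interior {s : Set V} (hs : Convex ℝ s) {x : V}
    (hx : x ∈ s) (hxs : x ∉ interior s) :
    ∃ f : StrongDual ℝ V, f ≠ 0 ∧ ∀ a ∈ s, f a ≤ f x := by
  by_cases hint : (interior s).Nonempty
  · exact geometric_hahn_banach_of_nonempty_interior_point hs hxs hint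
  -- Otherwise `s` lies in a proper affine subspace, on which a nonzero functional is constant.
  have hspan : (affineSpan ℝ s).direction < ⊤ := by
    rw [lt_top_iff_ne_top, Ne, AffineSubspace.direction_eq_top_iff_of_nonempty
      ((affineSpan_nonempty ℝ).2 ⟨x, hx⟩), ← hs.interior_nonempty_iff_affineSpan_eq_top]
    exact hint
  obtain ⟨f, hf, hker⟩ := (affineSpan ℝ s).direction.exists_le_ker_of_lt_top hspan
  refine ⟨LinearMap.toContinuousLinearMap f, by simpa using hf, fun a ha => le_of_eq ?_⟩
  have : f (a - x) = 0 :=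
    hker (AffineSubspace.vsub_mem_direction (mem_affineSpan ℝ ha) (mem_affineSpan ℝ hx))
  simpa [sub_eq_zero] using this

end Minkowski

-- Quantified over all spaces so that the induction can pass to the subspace containing a face.
def MinkowskiUpTo (n : ℕ) : Prop :=
  ∀ (V : Type u) [NormedAddCommGroup V] [NormedSpace ℝ V] [FiniteDimensional ℝ V],
    finrank ℝ V ≤ n → ∀ s : Set V, IsCompact s → Convex ℝ s →
      s ⊆ convexHull ℝ (s.extremePoints ℝ)

namespace MinkowskiUpTo

variable {n : ℕ} {V : Type u} [NormedAddCommGroup V] [NormedSpace ℝ V] [FiniteDimensional ℝ V]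
  {s : Set V}

theorem subset_convexHull_of_sub_mem (H : MinkowskiUpTo.{u} n) (W : Submodule ℝ V)
    (hW : finrank ℝ W ≤ n) (p : V) (hs : IsCompact s) (hconv : Convex ℝ s)
    (hsub : ∀ a ∈ s, a - p ∈ W) : s ⊆ convexHull ℝ (s.extremePoints ℝ) := by
  set φ : W →ᵃ[ℝ] V := W.subtype.toAffineMap + AffineMap.const ℝ W p
  have hφ : ∀ w, φ w = (w : V) + p := fun _ => rfl
  have hφs : φ '' (φ ⁻¹' s) = s := by
    refine image_preimage_eq_of_subset fun a ha => ⟨⟨a - p, hsub a ha⟩, ?_⟩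
    simp [hφ]
  have hcomp : IsCompact (φ ⁻¹' s) :=
    ((Homeomorph.addRight p).isClosedEmbedding.comp
      W.closed_of_finiteDimensional.isClosedEmbedding_subtypeVal).isCompact_preimage hs
  have hinj : Function.Injective φ := fun v w h => Subtype.ext (by simpa [hφ] using h)
  calc s = φ '' (φ ⁻¹' s) := hφs.symm
    _ ⊆ φ '' convexHull ℝ ((φ ⁻¹' s).extremePoints ℝ) :=
      image_mono (H W hW _ hcomp (hconv.affine_preimage φ))
    _ = convexHull ℝ (φ '' (φ ⁻¹' s).extremePoints ℝ) := φ.image_convexHull _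
    _ ⊆ convexHull ℝ (s.extremePoints ℝ) := by
      have := φ.image_extremePoints_subset_of_injective hinj (φ ⁻¹' s)
      rw [hφs] at this
      exact convexHull_mono this

theorem mem_convexHull_of_notMem_interior (H : MinkowskiUpTo.{u} n)
    (hV : finrank ℝ V ≤ n + 1) (hs : IsCompact s) (hconv : Convex ℝ s) {x : V} (hx : x ∈ s)
    (hxs : x ∉ interior s) : x ∈ convexHull ℝ (s.extremePoints ℝ) := by
  obtain ⟨f, hf, hfx⟩ := hconv.exists_dual_ne_zero_le_of_notMem_interior hx hxs
  set F := {a ∈ s | ∀ b ∈ s, f b ≤ f a}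
  have hF : IsExposed ℝ s F := fun _ => ⟨f, rfl⟩
  have hker : finrank ℝ (LinearMap.ker (f : V →ₗ[ℝ] ℝ)) ≤ n := by
    have : LinearMap.ker (f : V →ₗ[ℝ] ℝ) ≠ ⊤ := fun h =>
      hf (ContinuousLinearMap.coe_injective (LinearMap.ker_eq_top.1 h))
    have := Submodule.finrank_lt this
    omega
  have hFker : ∀ a ∈ F, a - x ∈ LinearMap.ker (f : V →ₗ[ℝ] ℝ) := fun a ha => by
    simpa [sub_eq_zero] using le_antisymm (hfx a ha.1) (ha.2 x hx)
  have hFhull := H.subset_convexHull_of_sub_mem _ hker x (hF.isCompact hs) (hF.convex hconv) hFker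
  exact convexHull_mono hF.isExtreme.extremePoints_subset_extremePoints (hFhull ⟨hx, hfx⟩)

theorem zero : MinkowskiUpTo.{u} 0 := by
  intro V _ _ _ hV s _ _
  have := Module.finrank_zero_iff.1 (Nat.le_zero.1 hV)
  rw [extremePoints_eq_self]
  exact subset_convexHull ℝ s

theorem succ (H : MinkowskiUpTo.{u} n) : MinkowskiUpTo.{u} (n + 1) := by
  intro V _ _ _ hV s hs hconv x hx
  rcases subsingleton_or_nontrivial V with hV' | hV'
  · rw [extremePoints_eq_self]
    exact subset_convexHull ℝ s hx
  by_cases hint : x ∈ interior s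
  · obtain ⟨y, hy⟩ := exists_ne x
    obtain ⟨a, ⟨ha, ha'⟩, b, ⟨hb, hb'⟩, hxab⟩ := hs.exists_mem_segment_notMem_interior hx hy.symm
    exact (convex_convexHull ℝ _).segment_subset
      (H.mem_convexHull_of_notMem_interior hV hs hconv ha ha')
      (H.mem_convexHull_of_notMem_interior hV hs hconv hb hb') hxab
  · exact H.mem_convexHull_of_notMem_interior hV hs hconv hx hint

end MinkowskiUpTo

theorem minkowskiUpTo (n : ℕ) : MinkowskiUpTo.{u} n :=
  Nat.rec .zero (fun _ => .succ) n

theorem IsCompact.subset_convexHull_extremePoints {V : Type u} [NormedAddCommGroup V]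
    [NormedSpace ℝ V] [FiniteDimensional ℝ V] {s : Set V} (hs : IsCompact s)
    (hconv : Convex ℝ s) : s ⊆ convexHull ℝ (s.extremePoints ℝ) :=
  minkowskiUpTo _ V le_rfl s hs hconv

section Decomposition

variable {V : Type*} [AddCommGroup V] [Module ℝ V]

theorem exists_fin_decomposition {ι : Type*} [Fintype ι] {A : Set V} (f : V → ℝ)
    (w : ι → ℝ) (z : ι → V) (hw : ∀ i, 0 < w i) (hw1 : ∑ i, w i = 1) (hz : ∀ i, z i ∈ A) :
    ∃ (l : ℕ) (q : Fin l → ℝ) (π : Fin l → V),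
      (∀ j, 0 < q j) ∧ (∑ j, q j = 1) ∧ (∀ j, π j ∈ A) ∧
      (∑ j, q j • π j = ∑ i, w i • z i) ∧ (∑ j, q j * f (π j) = ∑ i, w i * f (z i)) := by
  set e := (Fintype.equivFin ι).symm
  exact ⟨_, w ∘ e, z ∘ e, fun j => hw _, (e.sum_comp w).trans hw1, fun j => hz _,
    e.sum_comp fun i => w i • z i, e.sum_comp fun i => w i * f (z i)⟩

end Decomposition

section ExtremeDecomposition

variable {V : Type*} [NormedAddCommGroup V] [NormedSpace ℝ V] [FiniteDimensional ℝ V]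

theorem ConcaveOn.exists_extremePoints_decomposition_le {Ω : Set V} {f : V → ℝ}
    (hf : ConcaveOn ℝ Ω f) (hΩ : IsCompact Ω) {x : V} (hx : x ∈ Ω) :
    ∃ (l : ℕ) (q : Fin l → ℝ) (π : Fin l → V),
      (∀ j, 0 < q j) ∧ (∑ j, q j = 1) ∧ (∀ j, π j ∈ Ω.extremePoints ℝ) ∧
      (∑ j, q j • π j = x) ∧ (∑ j, q j * f (π j) ≤ f x) := by
  obtain ⟨ι, _, z, w, hz, -, hw, hw1, hwz⟩ :=
    eq_pos_convex_span_of_mem_convexHull (hΩ.subset_convexHull_extremePoints hf.1 hx)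
  obtain ⟨l, q, π, hq, hq1, hπ, hqπ, hqf⟩ :=
    exists_fin_decomposition f w z hw hw1 fun i => hz (mem_range_self i)
  refine ⟨l, q, π, hq, hq1, hπ, hqπ.trans hwz, hqf.le.trans ?_⟩
  have := hf.le_map_sum (t := Finset.univ) (fun i _ => (hw i).le) hw1
    fun i _ => extremePoints_subset (hz (mem_range_self i))
  simpa [hwz] using this

theorem ConcaveOn.exists_extremePoints_refinement_le {Ω : Set V} {f : V → ℝ}
    (hf : ConcaveOn ℝ Ω f) (hΩ : IsCompact Ω) {k : ℕ} (p : Fin k → ℝ) (ω : Fin k → V)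
    (hp : ∀ i, 0 < p i) (hp1 : ∑ i, p i = 1) (hω : ∀ i, ω i ∈ Ω) :
    ∃ (l : ℕ) (q : Fin l → ℝ) (π : Fin l → V),
      (∀ j, 0 < q j) ∧ (∑ j, q j = 1) ∧ (∀ j, π j ∈ Ω.extremePoints ℝ) ∧
      (∑ j, q j • π j = ∑ i, p i • ω i) ∧ (∑ j, q j * f (π j) ≤ ∑ i, p i * f (ω i)) := by
  choose l q π hq hq1 hπ hqπ hqf using
    fun i => hf.exists_extremePoints_decomposition_le hΩ (hω i)
  obtain ⟨m, w, z, hw, hw1, hz, hwz, hwf⟩ := exists_fin_decomposition f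
    (ι := Σ i, Fin (l i)) (fun ij => p ij.1 * q ij.1 ij.2) (fun ij => π ij.1 ij.2)
    (fun ij => mul_pos (hp _) (hq _ _))
    (by simp [Fintype.sum_sigma, ← Finset.mul_sum, hq1, hp1]) fun ij => hπ _ _
  refine ⟨m, w, z, hw, hw1, hz, ?_, ?_⟩
  · simp [hwz, Fintype.sum_sigma, mul_smul, ← Finset.smul_sum, hqπ]
  · rw [hwf, Fintype.sum_sigma]
    simp only [mul_assoc, ← Finset.mul_sum]
    exact Finset.sum_le_sum fun i _ => mul_le_mul_of_nonneg_left (hqf i) (hp i).le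

end ExtremeDecomposition

theorem stmt10_general
    {V : Type*} [NormedAddCommGroup V] [NormedSpace ℝ V] [FiniteDimensional ℝ V]
    (Ω : Set V) (hΩc : IsCompact Ω)
    (f : V → ℝ) (hfconc : ConcaveOn ℝ Ω f) :
    (∀ ω ∈ Ω, ∀ (k : ℕ) (p : Fin k → ℝ) (ωi : Fin k → V),
      (∀ i, 0 < p i) → (∑ i, p i = 1) → (∀ i, ωi i ∈ Ω) →
      (∑ i, p i • ωi i = ω) →
      ∃ (l : ℕ) (q : Fin l → ℝ) (π : Fin l → V),
        (∀ j, 0 < q j) ∧ (∑ j, q j = 1) ∧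
        (∀ j, π j ∈ Set.extremePoints ℝ Ω) ∧
        (∑ j, q j • π j = ω) ∧
        (∑ j, q j * f (π j) ≤ ∑ i, p i * f (ωi i))) ∧
    (∀ ω ∈ Ω,
      sInf {s : ℝ | ∃ (l : ℕ) (q : Fin l → ℝ) (π : Fin l → V),
        (∀ j, 0 < q j) ∧ (∑ j, q j = 1) ∧ (∀ j, π j ∈ Set.extremePoints ℝ Ω) ∧
        (∑ j, q j • π j = ω) ∧ s = ∑ j, q j * f (π j)}
      = sInf {s : ℝ | ∃ (k : ℕ) (p : Fin k → ℝ) (ωi : Fin k → V),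
        (∀ i, 0 < p i) ∧ (∑ i, p i = 1) ∧ (∀ i, ωi i ∈ Ω) ∧
        (∑ i, p i • ωi i = ω) ∧ s = ∑ i, p i * f (ωi i)}) := by
  refine ⟨fun ω _ k p ωi hp hp1 hω hsum => hsum ▸
    hfconc.exists_extremePoints_refinement_le hΩc p ωi hp hp1 hω, fun ω _ => ?_⟩
  apply csInf_eq_csInf_of_forall_exists_le
  · rintro _ ⟨l, q, π, hq, hq1, hπ, hqπ, rfl⟩
    exact ⟨_, ⟨l, q, π, hq, hq1, fun j => extremePoints_subset (hπ j), hqπ, rfl⟩, le_rfl⟩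
  · rintro _ ⟨k, p, ωi, hp, hp1, hω, rfl, rfl⟩
    obtain ⟨l, q, π, hq, hq1, hπ, hqπ, hle⟩ :=
      hfconc.exists_extremePoints_refinement_le hΩc p ωi hp hp1 hω
    exact ⟨_, ⟨l, q, π, hq, hq1, hπ, hqπ, rfl⟩, hle⟩

/-- If f is concave (and continuous) on a compact convex Ω, then every convex
decomposition can be refined to a decomposition into extreme points with a weighted
f-sum that is at most the original; consequently the roof infimum over extreme-point
decompositions equals the infimum over all decompositions. -/
theorem stmt10
    {V : Type*} [NormedAddCommGroup V] [NormedSpace ℝ V] [FiniteDimensional ℝ V]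
    (Ω : Set V) (hΩc : IsCompact Ω) (hΩ : Convex ℝ Ω)
    (f : V → ℝ) (hfconc : ConcaveOn ℝ Ω f) (hfcont : ContinuousOn f Ω) :
    (∀ ω ∈ Ω, ∀ (k : ℕ) (p : Fin k → ℝ) (ωi : Fin k → V),
      (∀ i, 0 < p i) → (∑ i, p i = 1) → (∀ i, ωi i ∈ Ω) →
      (∑ i, p i • ωi i = ω) →
      ∃ (l : ℕ) (q : Fin l → ℝ) (π : Fin l → V),
        (∀ j, 0 < q j) ∧ (∑ j, q j = 1) ∧
        (∀ j, π j ∈ Set.extremePoints ℝ Ω) ∧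
        (∑ j, q j • π j = ω) ∧
        (∑ j, q j * f (π j) ≤ ∑ i, p i * f (ωi i))) ∧
    (∀ ω ∈ Ω,
      sInf {s : ℝ | ∃ (l : ℕ) (q : Fin l → ℝ) (π : Fin l → V),
        (∀ j, 0 < q j) ∧ (∑ j, q j = 1) ∧ (∀ j, π j ∈ Set.extremePoints ℝ Ω) ∧
        (∑ j, q j • π j = ω) ∧ s = ∑ j, q j * f (π j)}
      = sInf {s : ℝ | ∃ (k : ℕ) (p : Fin k → ℝ) (ωi : Fin k → V),
        (∀ i, 0 < p i) ∧ (∑ i, p i = 1) ∧ (∀ i, ωi i ∈ Ω) ∧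
        (∑ i, p i • ωi i = ω) ∧ s = ∑ i, p i * f (ωi i)}) :=
  stmt10_general Ω hΩc f hfconc
end
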